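/- Let G be a finite graph, R a family of subsets X of V(G) each containing a fixed vertex v₁, let S = {X ∈ R : G[X] is connected}, and let Q = {(X, (X_L, X_R)) : X ∈ R, (X_L,X_R) a consistent cut of G[X] with v₁ ∈ X_L}. Then for any weight function w on V(G) and any target w₀, the cardinality of {(X,C) ∈ Q : w(X) = w₀} is congruent modulo 2 to the cardinality of {X ∈ S : w(X) = w₀}. -/

import Mathlib

/-!
Cuts `(L, X \ L)` of `G[X]` with no crossing edge are exactly the unions of connected components
of `G[X]`, so they are closed under symmetric difference and every one containing `v₁` contains the
component of `v₁`. If `G[X]` is connected, `X` itself is therefore the only such cut. Otherwise pick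
a component `C` avoiding `v₁`: `L ↦ L ∆ C` is a fixed-point-free involution on the cuts containing
`v₁`, so there is an even number of them. Summing over `X ∈ R` with `w(X) = w₀` gives the parity.
-/

open scoped Classical

open Finset
open scoped symmDiff

theorem Finset.card_filter_prod_mem_eq_sum {α β : Type*} [Fintype α] [Fintype β]
    (s : Finset α) (t : α → Finset β) :
    #{p : α × β | p.1 ∈ s ∧ p.2 ∈ t p.1} = ∑ a ∈ s, #(t a) := by
  rw [← card_sigma]
  exact card_equiv (Equiv.sigmaEquivProd α β).symm (by simp)

theorem Finset.even_card_of_involution {α : Type*} {s : Finset α} (g : α → α)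
    (hmem : ∀ a ∈ s, g a ∈ s) (hne : ∀ a ∈ s, g a ≠ a) (hinv : ∀ a ∈ s, g (g a) = a) :
    Even #s := by
  rw [← ZMod.natCast_eq_zero_iff_even, card_eq_sum_ones, Nat.cast_sum, Nat.cast_one]
  exact sum_involution (fun a _ => g a) (fun _ _ => by decide) (fun a ha _ => hne a ha) hmem hinv

namespace SimpleGraph

variable {V : Type*} [DecidableEq V] (G : SimpleGraph V)

def IsConsistentCut (X L : Finset V) : Prop :=
  L ⊆ X ∧ ∀ u ∈ L, ∀ v ∈ X \ L, ¬ G.Adj u v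

noncomputable def consistentCuts (X : Finset V) (v : V) : Finset (Finset V) :=
  {L ∈ X.powerset | G.IsConsistentCut X L ∧ v ∈ L}

noncomputable def reachableIn (X : Finset V) (a : (X : Set V)) : Finset V :=
  {y ∈ X | ∃ hy : y ∈ X, (G.induce (X : Set V)).Reachable a ⟨y, hy⟩}

variable {G}

theorem mem_consistentCuts {X L : Finset V} {v : V} :
    L ∈ G.consistentCuts X v ↔ G.IsConsistentCut X L ∧ v ∈ L := by
  simp only [consistentCuts, mem_filter, mem_powerset, and_iff_right_iff_imp]
  exact fun h => h.1.1

theorem IsConsistentCut.mem_iff_of_adj {X L : Finset V} (hL : G.IsConsistentCut X L) {u v : V}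
    (hu : u ∈ X) (hv : v ∈ X) (huv : G.Adj u v) : u ∈ L ↔ v ∈ L :=
  ⟨fun huL => by_contra fun hvL => hL.2 u huL v (mem_sdiff.2 ⟨hv, hvL⟩) huv,
    fun hvL => by_contra fun huL => hL.2 v hvL u (mem_sdiff.2 ⟨hu, huL⟩) huv.symm⟩

theorem IsConsistentCut.mem_of_reachable {X L : Finset V} (hL : G.IsConsistentCut X L)
    {a b : (X : Set V)} (hab : (G.induce (X : Set V)).Reachable a b) (ha : (a : V) ∈ L) :
    (b : V) ∈ L := by
  obtain ⟨p⟩ := hab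
  induction p with
  | nil => exact ha
  | @cons x y _ hxy _ ih => exact ih ((hL.mem_iff_of_adj x.2 y.2 (by simpa using hxy)).1 ha)

theorem IsConsistentCut.symmDiff {X L C : Finset V} (hL : G.IsConsistentCut X L)
    (hC : G.IsConsistentCut X C) : G.IsConsistentCut X (L ∆ C) := by
  have hsub : L ∆ C ⊆ X := symmDiff_le_sup.trans (union_subset hL.1 hC.1)
  refine ⟨hsub, fun u hu v hv huv => ?_⟩
  have huX : u ∈ X := hsub hu
  obtain ⟨hvX, hv⟩ := mem_sdiff.1 hv
  have hLuv := hL.mem_iff_of_adj huX hvX huv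
  have hCuv := hC.mem_iff_of_adj huX hvX huv
  rw [mem_symmDiff] at hu hv
  tauto

theorem isConsistentCut_reachableIn (X : Finset V) (a : (X : Set V)) :
    G.IsConsistentCut X (G.reachableIn X a) := by
  refine ⟨filter_subset _ _, fun u hu v hv huv => (mem_sdiff.1 hv).2 ?_⟩
  obtain ⟨-, hu, hau⟩ := mem_filter.1 hu
  have hvX := (mem_sdiff.1 hv).1
  exact mem_filter.2 ⟨hvX, hvX, hau.trans (Adj.reachable (by simpa using huv))⟩

theorem mem_reachableIn_self (X : Finset V) (a : (X : Set V)) : (a : V) ∈ G.reachableIn X a :=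
  mem_filter.2 ⟨a.2, a.2, Reachable.refl a⟩

theorem consistentCuts_eq_singleton_of_connected {X : Finset V} {v : V} (hv : v ∈ X)
    (hX : (G.induce (X : Set V)).Connected) : G.consistentCuts X v = {X} := by
  ext L
  rw [mem_consistentCuts, mem_singleton]
  constructor
  · rintro ⟨hL, hvL⟩
    refine hL.1.antisymm fun b hb => ?_
    exact hL.mem_of_reachable (a := ⟨v, hv⟩) (b := ⟨b, hb⟩) (hX.preconnected _ _) hvL
  · rintro rfl
    exact ⟨⟨subset_rfl, fun u _ x hx => absurd hx (by simp)⟩, hv⟩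

theorem even_card_consistentCuts_of_not_connected {X : Finset V} {v : V} (hv : v ∈ X)
    (hX : ¬ (G.induce (X : Set V)).Connected) : Even #(G.consistentCuts X v) := by
  rw [connected_iff_exists_forall_reachable] at hX
  push Not at hX
  obtain ⟨b, hb⟩ := hX ⟨v, hv⟩
  have hvC : v ∉ G.reachableIn X b := fun h => hb (mem_filter.1 h).2.2.symm
  have hC_ne : G.reachableIn X b ≠ ∅ := ne_empty_of_mem (mem_reachableIn_self X b)
  refine even_card_of_involution (fun L => L ∆ G.reachableIn X b) (fun L hL => ?_)
    (fun L _ => by simpa [symmDiff_eq_left] using hC_ne)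
    (fun L _ => symmDiff_symmDiff_cancel_right _ _)
  obtain ⟨hL, hvL⟩ := mem_consistentCuts.1 hL
  exact mem_consistentCuts.2
    ⟨hL.symmDiff (isConsistentCut_reachableIn X b), mem_symmDiff.2 (.inl ⟨hvL, hvC⟩)⟩

theorem card_consistentCuts_cast_zmod_two {X : Finset V} {v : V} (hv : v ∈ X) :
    (#(G.consistentCuts X v) : ZMod 2) = if (G.induce (X : Set V)).Connected then 1 else 0 := by
  split_ifs with hX
  · simp [consistentCuts_eq_singleton_of_connected hv hX]
  · exact (even_card_consistentCuts_of_not_connected hv hX).natCast_zmod_two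

end SimpleGraph

open SimpleGraph

/-- Core counting identity of the Cut&Count technique: the number of pairs
`(X, (X_L, X_R))` with `X ∈ R`, `(X_L, X_R)` a consistent cut of `G[X]` with `v₁ ∈ X_L`
(represented by the pair `(X, X_L)`) and `w(X) = w₀`, is congruent modulo 2 to the number
of `X ∈ R` with `G[X]` connected and `w(X) = w₀`. -/
theorem cut_and_count_parity {V : Type*} [Fintype V] [DecidableEq V]
    (G : SimpleGraph V) (R : Finset (Finset V)) (v₁ : V) (hR : ∀ X ∈ R, v₁ ∈ X)
    (w : V → ℕ) (w₀ : ℕ) :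
    (Finset.univ.filter (fun p : Finset V × Finset V =>
        p.1 ∈ R ∧ p.2 ⊆ p.1 ∧ v₁ ∈ p.2 ∧
        (∀ u ∈ p.2, ∀ v ∈ p.1 \ p.2, ¬ G.Adj u v) ∧
        (∑ x ∈ p.1, w x) = w₀)).card ≡
      (R.filter (fun X =>
        (G.induce (X : Set V)).Connected ∧ (∑ x ∈ X, w x) = w₀)).card [MOD 2] := by
  set R₀ := R.filter (fun X => ∑ x ∈ X, w x = w₀)
  have hpairs : (Finset.univ.filter (fun p : Finset V × Finset V =>
        p.1 ∈ R ∧ p.2 ⊆ p.1 ∧ v₁ ∈ p.2 ∧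
        (∀ u ∈ p.2, ∀ v ∈ p.1 \ p.2, ¬ G.Adj u v) ∧
        (∑ x ∈ p.1, w x) = w₀)).card = ∑ X ∈ R₀, #(G.consistentCuts X v₁) := by
    rw [← card_filter_prod_mem_eq_sum]
    congr 1
    ext p
    simp only [R₀, mem_filter, mem_univ, true_and, mem_consistentCuts, IsConsistentCut]
    tauto
  have hconn : (R.filter (fun X =>
        (G.induce (X : Set V)).Connected ∧ (∑ x ∈ X, w x) = w₀)).card =
      #(R₀.filter fun X : Finset V => (G.induce (X : Set V)).Connected) := by
    -- `(X : Set V)` makes the statement filter the image of `R` in `Finset (Set V)`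
    rw [show (R : Finset (Set V)) = R.image (↑) from sup_singleton_apply _ _, filter_image,
      card_image_of_injective _ coe_injective, filter_filter]
    simp only [toFinset_coe, and_comm]
  rw [hpairs, hconn, ← ZMod.natCast_eq_natCast_iff, card_filter, Nat.cast_sum, Nat.cast_sum]
  refine sum_congr rfl fun X hX => ?_
  rw [card_consistentCuts_cast_zmod_two (hR X (mem_filter.1 hX).1)]
  split_ifs <;> simp
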